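/- Let α be an interval t-coloring of K_{2n} with shift vector (b_1, b_2, …, b_{n-1}), and suppose that for some k with 3 ≤ k ≤ n-1 the initial segment is saturated, i.e., b_1 + b_2 + … + b_k = 2k - 1. Then b_k ≥ 3. -/

import Mathlib

/-- An interval `t`-coloring of the complete graph on `Fin m`:
a proper edge-coloring with colors in `{1,…,t}`, using every color,
such that the spectrum (set of colors incident to each vertex) is an
interval of consecutive integers. -/
def IsIntervalColoring (m t : ℕ) (c : Sym2 (Fin m) → ℕ) : Prop :=
  (∀ u v w : Fin m, u ≠ v → u ≠ w → v ≠ w → c s(u, v) ≠ c s(u, w)) ∧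
  (∀ u v : Fin m, u ≠ v → c s(u, v) ∈ Finset.Icc 1 t) ∧
  (∀ k : ℕ, 1 ≤ k → k ≤ t → ∃ u v : Fin m, u ≠ v ∧ c s(u, v) = k) ∧
  (∀ v : Fin m, ∃ a b : ℕ,
    {k : ℕ | ∃ u : Fin m, u ≠ v ∧ c s(u, v) = k} = Set.Icc a b)

/-- `W m` is the greatest `t` for which the complete graph on `m` vertices
has an interval `t`-coloring. -/
noncomputable def W (m : ℕ) : ℕ :=
  sSup {t : ℕ | ∃ c : Sym2 (Fin m) → ℕ, IsIntervalColoring m t c}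

/-- The smallest color on an edge incident to `v`. -/
noncomputable def minColor (m : ℕ) (c : Sym2 (Fin m) → ℕ) (v : Fin m) : ℕ :=
  sInf {k : ℕ | ∃ u : Fin m, u ≠ v ∧ c s(u, v) = k}

/-- The list `m_1 ≤ m_2 ≤ … ≤ m_{2n}` of smallest incident colors of the
vertices, in nondecreasing order. -/
noncomputable def sortedMins (m : ℕ) (c : Sym2 (Fin m) → ℕ) : List ℕ :=
  ((Finset.univ : Finset (Fin m)).val.map (minColor m c)).sort (· ≤ ·)

/-- The `i`-th entry `b_i = m_{2i+1} - m_{2i-1}` of the shift vector of a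
coloring of `K_{2n}` (1-based positions; `m_j` is the `j`-th sorted smallest
incident color). Meaningful for `1 ≤ i ≤ n-1`. -/
noncomputable def shiftVec (n : ℕ) (c : Sym2 (Fin (2 * n)) → ℕ) (i : ℕ) : ℕ :=
  (sortedMins (2 * n) c).getD (2 * i) 0 - (sortedMins (2 * n) c).getD (2 * i - 2) 0

/-! Write `F x` for the set of vertices whose smallest color is at most `x`. Saturation gives
`m_{2k+1} = 2k`, and `b_k ≤ 2` would give `m_{2k-1} ≥ 2k - 2`, i.e. `|F (2k-3)| ≤ 2k - 2` and
`|F (2k-1)| ≤ 2k`. If `w` is an endpoint of the edge of color `1`, its neighbours along the colors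
`1, …, x` lie in `F x`, so `|F x| ≥ x + 1`; when equality holds they exhaust `F x`, so every vertex
of `F x` is joined to `w` by a color `≤ x`. With `a = 2k - 3` this leaves exactly two vertices of
smallest color in `(a, a + 2]`, and each of them uses both colors `a + 1, a + 2` on its edges to
the two endpoints of the color-`1` edge. The neighbour `v` of one endpoint along color `2` then
needs `a + 3 - s(v) ≥ a + 1` neighbours in `F (a + 2)` other than itself and those two vertices,
but only `a` are left. -/

lemma List.Pairwise.countP_le_of_lt_getElem {α : Type*} [LinearOrder α] {L : List α}
    (hL : L.Pairwise (· ≤ ·)) {i : ℕ} (hi : i < L.length) {x : α} (hx : x < L[i]) :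
    L.countP (· ≤ x) ≤ i := by
  have hdrop : (L.drop i).countP (· ≤ x) = 0 := by
    have hsorted : (L[i] :: L.drop (i + 1)).Pairwise (· ≤ ·) :=
      List.drop_eq_getElem_cons hi ▸ hL.sublist (List.drop_sublist i L)
    rw [List.drop_eq_getElem_cons hi, List.countP_eq_zero]
    intro a ha
    rcases List.mem_cons.mp ha with rfl | ha
    · simpa using hx
    · simpa using hx.trans_le (List.rel_of_pairwise_cons hsorted ha)
  have htake : (L.take i).countP (· ≤ x) ≤ i :=
    List.countP_le_length.trans (List.length_take_le i L)
  rw [← L.take_append_drop i, List.countP_append]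
  omega

lemma List.Pairwise.getD_le_getD {α : Type*} [Preorder α] {L : List α}
    (hL : L.Pairwise (· ≤ ·)) (d : α) {i j : ℕ} (hij : i ≤ j) (hj : j < L.length) :
    L.getD i d ≤ L.getD j d := by
  rw [List.getD_eq_getElem _ _ (hij.trans_lt hj), List.getD_eq_getElem _ _ hj]
  rcases hij.lt_or_eq with hij | rfl
  · exact List.pairwise_iff_getElem.mp hL i j (hij.trans hj) hj hij
  · exact le_rfl

section
variable {m t : ℕ} {c : Sym2 (Fin m) → ℕ}

lemma minColor_le_color {u v : Fin m} (huv : u ≠ v) : minColor m c u ≤ c s(u, v) :=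
  Nat.sInf_le ⟨v, huv.symm, by rw [Sym2.eq_swap]⟩

lemma IsIntervalColoring.eq_of_color_eq (hc : IsIntervalColoring m t c) {u w v : Fin m}
    (hu : u ≠ v) (hw : w ≠ v) (h : c s(u, v) = c s(w, v)) : u = w := by
  by_contra huw
  rw [Sym2.eq_swap, Sym2.eq_swap (a := w)] at h
  exact hc.1 v u w hu.symm hw.symm huw h

lemma IsIntervalColoring.spectrum_eq (hc : IsIntervalColoring m t c) (hm : 2 ≤ m) (v : Fin m) :
    {k : ℕ | ∃ u : Fin m, u ≠ v ∧ c s(u, v) = k}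
      = Set.Icc (minColor m c v) (minColor m c v + (m - 2)) := by
  obtain ⟨a, b, hab⟩ := hc.2.2.2 v
  have hcard : ((Finset.univ.erase v).image (fun u => c s(u, v))).card = m - 1 := by
    rw [Finset.card_image_of_injOn, Finset.card_erase_of_mem (Finset.mem_univ v),
      Finset.card_univ, Fintype.card_fin]
    exact fun x hx y hy =>
      hc.eq_of_color_eq (Finset.ne_of_mem_erase hx) (Finset.ne_of_mem_erase hy)
  have himage : (Finset.univ.erase v).image (fun u => c s(u, v)) = Finset.Icc a b := by
    apply Finset.coe_injective
    rw [Finset.coe_Icc, ← hab]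
    ext
    simp
  rw [himage, Nat.card_Icc] at hcard
  have hmin : minColor m c v = a := by
    rw [minColor, hab]
    exact csInf_Icc (by omega)
  rw [hab, hmin, show b = a + (m - 2) by omega]

lemma IsIntervalColoring.exists_color_eq_iff (hc : IsIntervalColoring m t c) (hm : 2 ≤ m)
    (v : Fin m) (j : ℕ) :
    (∃ u : Fin m, u ≠ v ∧ c s(u, v) = j) ↔
      minColor m c v ≤ j ∧ j ≤ minColor m c v + (m - 2) :=
  Set.ext_iff.mp (hc.spectrum_eq hm v) j

lemma IsIntervalColoring.one_le_minColor (hc : IsIntervalColoring m t c) (hm : 2 ≤ m)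
    (v : Fin m) : 1 ≤ minColor m c v := by
  obtain ⟨u, hu, hcu⟩ := (hc.exists_color_eq_iff hm v _).mpr ⟨le_rfl, Nat.le_add_right _ _⟩
  have := Finset.mem_Icc.mp (hc.2.1 u v hu)
  omega

lemma IsIntervalColoring.exists_minColor_eq_one (hc : IsIntervalColoring m t c) (hm : 2 ≤ m) :
    ∃ w₁ w₂ : Fin m, w₁ ≠ w₂ ∧ c s(w₁, w₂) = 1 ∧ minColor m c w₁ = 1 ∧ minColor m c w₂ = 1 := by
  have h01 : (⟨0, by omega⟩ : Fin m) ≠ ⟨1, by omega⟩ := by simp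
  have ht : 1 ≤ t := by
    have := Finset.mem_Icc.mp (hc.2.1 _ _ h01)
    omega
  obtain ⟨w₁, w₂, hw, h⟩ := hc.2.2.1 1 le_rfl ht
  have h₁ := minColor_le_color (c := c) hw
  have h₂ := minColor_le_color (c := c) hw.symm
  rw [Sym2.eq_swap, h] at h₂
  have := hc.one_le_minColor hm w₁
  have := hc.one_le_minColor hm w₂
  exact ⟨w₁, w₂, hw, h, by omega, by omega⟩

noncomputable def minColorSublevel (m : ℕ) (c : Sym2 (Fin m) → ℕ) (x : ℕ) : Finset (Fin m) :=
  Finset.univ.filter (fun v => minColor m c v ≤ x)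

def neighborsWithColorIn (m : ℕ) (c : Sym2 (Fin m) → ℕ) (v : Fin m) (I : Finset ℕ) :
    Finset (Fin m) :=
  Finset.univ.filter (fun u => u ≠ v ∧ c s(u, v) ∈ I)

lemma mem_minColorSublevel {x : ℕ} {v : Fin m} :
    v ∈ minColorSublevel m c x ↔ minColor m c v ≤ x := by
  simp [minColorSublevel]

lemma mem_neighborsWithColorIn {v u : Fin m} {I : Finset ℕ} :
    u ∈ neighborsWithColorIn m c v I ↔ u ≠ v ∧ c s(u, v) ∈ I := by
  simp [neighborsWithColorIn]

lemma IsIntervalColoring.card_neighborsWithColorIn (hc : IsIntervalColoring m t c) (hm : 2 ≤ m)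
    {v : Fin m} {I : Finset ℕ}
    (hI : ∀ j ∈ I, minColor m c v ≤ j ∧ j ≤ minColor m c v + (m - 2)) :
    (neighborsWithColorIn m c v I).card = I.card := by
  have himage : (neighborsWithColorIn m c v I).image (fun u => c s(u, v)) = I := by
    ext j
    simp only [Finset.mem_image, mem_neighborsWithColorIn]
    constructor
    · rintro ⟨u, ⟨-, hu⟩, rfl⟩
      exact hu
    · intro hj
      obtain ⟨u, hu, rfl⟩ := (hc.exists_color_eq_iff hm v j).mpr (hI j hj)
      exact ⟨u, ⟨hu, hj⟩, rfl⟩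
  rw [← Finset.card_image_of_injOn (f := fun u => c s(u, v)), himage]
  exact fun u hu w hw => hc.eq_of_color_eq (mem_neighborsWithColorIn.mp hu).1
    (mem_neighborsWithColorIn.mp hw).1

lemma neighborsWithColorIn_subset {v : Fin m} {I : Finset ℕ} {x : ℕ} (hI : ∀ j ∈ I, j ≤ x) :
    neighborsWithColorIn m c v I ⊆ (minColorSublevel m c x).erase v := by
  intro u hu
  obtain ⟨huv, hcol⟩ := mem_neighborsWithColorIn.mp hu
  exact Finset.mem_erase.mpr
    ⟨huv, mem_minColorSublevel.mpr ((minColor_le_color huv).trans (hI _ hcol))⟩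

lemma IsIntervalColoring.card_neighborsWithColorIn_Icc_one (hc : IsIntervalColoring m t c)
    (hm : 2 ≤ m) {w : Fin m} (hw : minColor m c w = 1) {j : ℕ} (hj : j + 1 ≤ m) :
    (neighborsWithColorIn m c w (Finset.Icc 1 j)).card = j := by
  rw [hc.card_neighborsWithColorIn hm, Nat.card_Icc, Nat.add_sub_cancel]
  intro i hi
  rw [Finset.mem_Icc] at hi
  omega

lemma IsIntervalColoring.le_card_minColorSublevel (hc : IsIntervalColoring m t c) (hm : 2 ≤ m)
    {w : Fin m} (hw : minColor m c w = 1) {j : ℕ} (hj₁ : 1 ≤ j) (hj : j + 1 ≤ m) :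
    j + 1 ≤ (minColorSublevel m c j).card := by
  have hwj : w ∈ minColorSublevel m c j := mem_minColorSublevel.mpr (hw ▸ hj₁)
  have := Finset.card_le_card
    (neighborsWithColorIn_subset (c := c) (v := w) (I := Finset.Icc 1 j) (x := j)
      fun i hi => (Finset.mem_Icc.mp hi).2)
  rw [hc.card_neighborsWithColorIn_Icc_one hm hw hj] at this
  have := Finset.card_erase_add_one hwj
  omega

/-- When the sublevel set at `J` is as small as `J + 1`, it consists of `w` and its neighbours
along the colors `1, …, J`. -/
lemma IsIntervalColoring.color_le_of_card_minColorSublevel_le (hc : IsIntervalColoring m t c)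
    (hm : 2 ≤ m) {w : Fin m} (hw : minColor m c w = 1) {J : ℕ} (hJ₁ : 1 ≤ J) (hJ : J + 1 ≤ m)
    (hcard : (minColorSublevel m c J).card ≤ J + 1) {u : Fin m}
    (hu : minColor m c u ≤ J) (huw : u ≠ w) : c s(u, w) ≤ J := by
  have hwJ : w ∈ minColorSublevel m c J := mem_minColorSublevel.mpr (hw ▸ hJ₁)
  have hsub := neighborsWithColorIn_subset (c := c) (v := w) (I := Finset.Icc 1 J) (x := J)
    fun i hi => (Finset.mem_Icc.mp hi).2
  have heq := Finset.eq_of_subset_of_card_le hsub (by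
    rw [hc.card_neighborsWithColorIn_Icc_one hm hw hJ]
    have := Finset.card_erase_add_one hwJ
    omega)
  have hmem : u ∈ neighborsWithColorIn m c w (Finset.Icc 1 J) :=
    heq ▸ Finset.mem_erase.mpr ⟨huw, mem_minColorSublevel.mpr hu⟩
  exact (Finset.mem_Icc.mp (mem_neighborsWithColorIn.mp hmem).2).2

variable {a : ℕ}

lemma IsIntervalColoring.color_mem_Ioc_of_mem_sdiff (hc : IsIntervalColoring m t c)
    (ha : 1 ≤ a) (ham : a + 3 ≤ m) (hcard : (minColorSublevel m c (a + 2)).card ≤ a + 3)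
    {w : Fin m} (hw : minColor m c w = 1) {u : Fin m}
    (hu : u ∈ minColorSublevel m c (a + 2) \ minColorSublevel m c a) :
    u ≠ w ∧ c s(u, w) ∈ Finset.Ioc a (a + 2) := by
  rw [Finset.mem_sdiff, mem_minColorSublevel, mem_minColorSublevel] at hu
  have huw : u ≠ w := by
    rintro rfl
    omega
  refine ⟨huw, Finset.mem_Ioc.mpr ⟨?_, ?_⟩⟩
  · exact (not_le.mp hu.2).trans_le (minColor_le_color huw)
  · exact hc.color_le_of_card_minColorSublevel_le (by omega) hw (by omega) ham hcard hu.1 huw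

lemma IsIntervalColoring.card_sdiff_minColorSublevel_le_two (hc : IsIntervalColoring m t c)
    (ha : 1 ≤ a) (ham : a + 3 ≤ m) (hcard : (minColorSublevel m c (a + 2)).card ≤ a + 3)
    {w : Fin m} (hw : minColor m c w = 1) :
    (minColorSublevel m c (a + 2) \ minColorSublevel m c a).card ≤ 2 := by
  have := Finset.card_le_card_of_injOn (fun u => c s(u, w))
    (fun u hu => (hc.color_mem_Ioc_of_mem_sdiff ha ham hcard hw hu).2)
    (fun u hu v hv => hc.eq_of_color_eq (hc.color_mem_Ioc_of_mem_sdiff ha ham hcard hw hu).1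
      (hc.color_mem_Ioc_of_mem_sdiff ha ham hcard hw hv).1)
  rwa [Nat.card_Ioc, Nat.add_sub_cancel_left] at this

/-- A vertex `u` of minimum color in `(a, a + 2]` spends both colors `a + 1, a + 2` on its edges
to `w₁` and `w₂`. -/
lemma IsIntervalColoring.eq_or_eq_of_mem_sdiff (hc : IsIntervalColoring m t c)
    (ha : 1 ≤ a) (ham : a + 3 ≤ m) (hcard : (minColorSublevel m c (a + 2)).card ≤ a + 3)
    {w₁ w₂ : Fin m} (hw : w₁ ≠ w₂) (hw₁ : minColor m c w₁ = 1) (hw₂ : minColor m c w₂ = 1)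
    {u : Fin m} (hu : u ∈ minColorSublevel m c (a + 2) \ minColorSublevel m c a)
    {x : Fin m} (hxu : x ≠ u) (hx : c s(u, x) ≤ a + 2) : x = w₁ ∨ x = w₂ := by
  obtain ⟨huw₁, h₁⟩ := hc.color_mem_Ioc_of_mem_sdiff ha ham hcard hw₁ hu
  obtain ⟨huw₂, h₂⟩ := hc.color_mem_Ioc_of_mem_sdiff ha ham hcard hw₂ hu
  have hne := hc.1 u w₁ w₂ huw₁ huw₂ hw
  have hlow : a < c s(u, x) := by
    have := (Finset.mem_sdiff.mp hu).2
    rw [mem_minColorSublevel] at this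
    exact (not_le.mp this).trans_le (minColor_le_color hxu.symm)
  by_contra! hx'
  have := hc.1 u x w₁ hxu.symm huw₁ hx'.1
  have := hc.1 u x w₂ hxu.symm huw₂ hx'.2
  rw [Finset.mem_Ioc] at h₁ h₂
  omega

lemma IsIntervalColoring.card_sdiff_minColorSublevel_eq_two (hc : IsIntervalColoring m t c)
    (ha : 1 ≤ a) (ham : a + 3 ≤ m) (hF : (minColorSublevel m c a).card ≤ a + 1)
    (hcard : (minColorSublevel m c (a + 2)).card ≤ a + 3)
    {w : Fin m} (hw : minColor m c w = 1) :
    (minColorSublevel m c (a + 2) \ minColorSublevel m c a).card = 2 := by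
  refine le_antisymm (hc.card_sdiff_minColorSublevel_le_two ha ham hcard hw) ?_
  have := hc.le_card_minColorSublevel (by omega) hw (j := a + 2) (by omega) ham
  rw [Finset.card_sdiff_of_subset fun v hv => mem_minColorSublevel.mpr
    ((mem_minColorSublevel.mp hv).trans (Nat.le_add_right a 2))]
  omega

lemma IsIntervalColoring.lt_card_minColorSublevel (hc : IsIntervalColoring m t c)
    (ha : 2 ≤ a) (ham : a + 3 ≤ m) (hF : (minColorSublevel m c a).card ≤ a + 1) :
    a + 3 < (minColorSublevel m c (a + 2)).card := by
  by_contra! hcard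
  have hm : 2 ≤ m := by omega
  obtain ⟨w₁, w₂, hw, hc₁, hw₁, hw₂⟩ := hc.exists_minColor_eq_one hm
  set P := minColorSublevel m c (a + 2) \ minColorSublevel m c a
  have hP : P.card = 2 := hc.card_sdiff_minColorSublevel_eq_two (by omega) ham hF hcard hw₁
  -- `v` has minimum color `≤ 2`, so its colors up to `a + 2` lead to more vertices of
  -- `minColorSublevel m c (a + 2)` than remain outside `P ∪ {v}`.
  obtain ⟨v, hvw₁, hcv⟩ := (hc.exists_color_eq_iff hm w₁ 2).mpr (by omega)
  have hvw₂ : v ≠ w₂ := by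
    rintro rfl
    rw [Sym2.eq_swap, hc₁] at hcv
    omega
  have hv : minColor m c v ≤ 2 := hcv ▸ minColor_le_color hvw₁
  have hv₁ := hc.one_le_minColor hm v
  have hvP : v ∈ minColorSublevel m c (a + 2) \ P := by
    simp only [P, Finset.mem_sdiff, mem_minColorSublevel]
    omega
  have hsub : neighborsWithColorIn m c v (Finset.Icc (minColor m c v) (a + 2))
      ⊆ (minColorSublevel m c (a + 2) \ P).erase v := by
    intro x hx
    obtain ⟨hxv, hcol⟩ := mem_neighborsWithColorIn.mp hx
    rw [Finset.mem_Icc] at hcol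
    refine Finset.mem_erase.mpr ⟨hxv, Finset.mem_sdiff.mpr ⟨?_, fun hxP => ?_⟩⟩
    · exact mem_minColorSublevel.mpr ((minColor_le_color hxv).trans hcol.2)
    · rcases hc.eq_or_eq_of_mem_sdiff (by omega) ham hcard hw hw₁ hw₂ hxP hxv.symm
        hcol.2 with rfl | rfl <;> contradiction
  have := Finset.card_le_card hsub
  rw [hc.card_neighborsWithColorIn hm (fun j hj => by rw [Finset.mem_Icc] at hj; omega),
    Nat.card_Icc, Finset.card_erase_of_mem hvP,
    Finset.card_sdiff_of_subset Finset.sdiff_subset, hP] at this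
  omega

lemma length_sortedMins : (sortedMins m c).length = m := by
  simp [sortedMins]

lemma pairwise_sortedMins : (sortedMins m c).Pairwise (· ≤ ·) :=
  Multiset.pairwise_sort _ _

lemma sortedMins_getD_le_getD {i j : ℕ} (hij : i ≤ j) (hj : j < m) :
    (sortedMins m c).getD i 0 ≤ (sortedMins m c).getD j 0 :=
  pairwise_sortedMins.getD_le_getD 0 hij (length_sortedMins.symm ▸ hj)

lemma mem_sortedMins {x : ℕ} : x ∈ sortedMins m c ↔ ∃ v, minColor m c v = x := by
  simp [sortedMins]

lemma card_minColorSublevel_eq_countP (x : ℕ) :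
    (minColorSublevel m c x).card = (sortedMins m c).countP (· ≤ x) := by
  rw [sortedMins, ← Multiset.coe_countP, Multiset.sort_eq, Multiset.countP_map]
  rfl

lemma card_minColorSublevel_le_of_lt_getD {i x : ℕ} (h : x < (sortedMins m c).getD i 0) :
    (minColorSublevel m c x).card ≤ i := by
  have hi : i < (sortedMins m c).length := by
    by_contra! hi
    rw [List.getD_eq_default _ _ hi] at h
    omega
  rw [List.getD_eq_getElem _ _ hi] at h
  exact card_minColorSublevel_eq_countP x ▸ pairwise_sortedMins.countP_le_of_lt_getElem hi h

lemma IsIntervalColoring.sortedMins_getD_zero (hc : IsIntervalColoring m t c) (hm : 2 ≤ m) :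
    (sortedMins m c).getD 0 0 = 1 := by
  have hlen : 0 < (sortedMins m c).length := by rw [length_sortedMins]; omega
  obtain ⟨w, -, -, -, hw, -⟩ := hc.exists_minColor_eq_one hm
  obtain ⟨i, hi, hw'⟩ := List.mem_iff_getElem.mp (mem_sortedMins.mpr ⟨w, hw⟩)
  have hle := sortedMins_getD_le_getD (c := c) (Nat.zero_le i) (by rwa [length_sortedMins] at hi)
  rw [List.getD_eq_getElem _ _ hi, hw'] at hle
  obtain ⟨v, hv⟩ := mem_sortedMins.mp (List.getElem_mem hlen)
  have := hc.one_le_minColor hm v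
  rw [List.getD_eq_getElem _ _ hlen] at hle ⊢
  omega

end

lemma sum_shiftVec_eq (n : ℕ) (c : Sym2 (Fin (2 * n)) → ℕ) {K : ℕ} (hK : K < n) :
    ∑ i ∈ Finset.Icc 1 K, shiftVec n c i
      = (sortedMins (2 * n) c).getD (2 * K) 0 - (sortedMins (2 * n) c).getD 0 0 := by
  induction K with
  | zero => simp
  | succ K ih =>
    rw [Finset.sum_Icc_succ_top (by omega), ih (by omega), shiftVec,
      show 2 * (K + 1) - 2 = 2 * K by omega]
    have := sortedMins_getD_le_getD (c := c) (Nat.zero_le (2 * K)) (by omega)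
    have := sortedMins_getD_le_getD (c := c) (show 2 * K ≤ 2 * (K + 1) by omega) (by omega)
    omega

/-- If the initial segment `(b_1,…,b_k)` of the shift vector of an interval
coloring of `K_{2n}` is saturated (`b_1 + ⋯ + b_k = 2k - 1`) for some
`3 ≤ k ≤ n-1`, then `b_k ≥ 3`. -/
theorem statement_17 (n t : ℕ) (c : Sym2 (Fin (2 * n)) → ℕ)
    (hc : IsIntervalColoring (2 * n) t c) (k : ℕ) (hk1 : 3 ≤ k) (hk2 : k ≤ n - 1)
    (hsat : ∑ i ∈ Finset.Icc 1 k, shiftVec n c i = 2 * k - 1) :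
    3 ≤ shiftVec n c k := by
  have hsum := sum_shiftVec_eq n c (K := k) (by omega)
  rw [hsat, hc.sortedMins_getD_zero (by omega)] at hsum
  have := sortedMins_getD_le_getD (c := c) (Nat.zero_le (2 * k)) (by omega)
  have := sortedMins_getD_le_getD (c := c) (show 2 * k - 2 ≤ 2 * k by omega) (by omega)
  by_contra! hbk
  rw [shiftVec] at hbk
  have hlow : (minColorSublevel (2 * n) c (2 * k - 3)).card ≤ 2 * k - 2 :=
    card_minColorSublevel_le_of_lt_getD (by omega)
  have hhigh : (minColorSublevel (2 * n) c (2 * k - 3 + 2)).card ≤ 2 * k :=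
    card_minColorSublevel_le_of_lt_getD (by omega)
  have := hc.lt_card_minColorSublevel (a := 2 * k - 3) (by omega) (by omega) (by omega)
  omega
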